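/- Let A be a finite-dimensional vector space over a field F carrying a 3-Lie algebra structure [·,·,·], and let [·,·,·]_* be a 3-Lie algebra structure on A*. Define ad* : A × A → End(A*) by (ad*_{x,y}ξ)(z) = −ξ([x,y,z]) and aφ* : A* × A* → End(A) by ζ(aφ*_{α,β}x) = −([α,β,ζ]_*)(x) for all ζ ∈ A*. Then the bracket on A ⊕ A* given by [x1+ξ1, x2+ξ2, x3+ξ3] = [x1,x2,x3] + ad*_{x1,x2}ξ3 + ad*_{x3,x1}ξ2 + ad*_{x2,x3}ξ1 + aφ*_{ξ1,ξ2}x3 + aφ*_{ξ3,ξ1}x2 + aφ*_{ξ2,ξ3}x1 + [ξ1,ξ2,ξ3]_* satisfies the Filippov identity (i.e., A ⊕ A* is a 3-Lie algebra) if and only if (A, A*, ad*, aφ*) is a matched pair, that is: every ad*_{x,y} is a derivation of (A*,[·,·,·]_*), every aφ*_{α,β} is a derivation of (A,[·,·,·]), and for all x1,x2,x3 ∈ A, a1,a2,a3 ∈ A* the four compatibility identities hold: (1) ad_{x1,x2}(aφ*_{a1,a2}x3) − aφ*_{a1,a2}(ad_{x1,x2}x3) = aφ*_{ad*_{x1,x2}a1,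 a2}x3 + aφ*_{a1, ad*_{x1,x2}a2}x3; (2) ad^*-ad-compatibility on A*: ad^{(*)}_{a1,a2}(ad*_{x1,x2}a3) − ad*_{x1,x2}(ad^{(*)}_{a1,a2}a3) = ad*_{aφ*_{a1,a2}x1, x2}a3 + ad*_{x1, aφ*_{a1,a2}x2}a3, where ad^{(*)}_{a,b}c = [a,b,c]_*; (3) ad_{x1,x2}(aφ*_{a1,a2}x3) = aφ*_{ad*_{x1,x2}a1, a2}x3 − aφ*_{a1, ad*_{x3,x1}a2}x2 − aφ*_{a1, ad*_{x2,x3}a2}x1; (4) ad^{(*)}_{a1,a2}(ad*_{x1,x2}a3) = ad*_{aφ*_{a1,a2}x1, x2}a3 − ad*_{x1, aφ*_{a3,a1}x2}a2 − ad*_{x1, aφ*_{a2,a3}x2}a1, where ad_{x,y}z = [x,y,z]. -/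

import Mathlib

section Defs

variable {F : Type*} [Field F] {A : Type*} [AddCommGroup A] [Module F A]

/-- Total skew-symmetry of a trilinear bracket. -/
def IsAlt (br : A →ₗ[F] A →ₗ[F] A →ₗ[F] A) : Prop :=
  (∀ x z, br x x z = 0) ∧ (∀ x y, br x y y = 0) ∧ (∀ x y, br x y x = 0)

/-- The Filippov (fundamental) identity. -/
def Filippov (br : A →ₗ[F] A →ₗ[F] A →ₗ[F] A) : Prop :=
  ∀ x1 x2 x3 x4 x5,
    br x1 x2 (br x3 x4 x5) =
      br (br x1 x2 x3) x4 x5 + br x3 (br x1 x2 x4) x5 + br x3 x4 (br x1 x2 x5)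

/-- A 3-Lie algebra structure. -/
def Is3Lie (br : A →ₗ[F] A →ₗ[F] A →ₗ[F] A) : Prop := IsAlt br ∧ Filippov br

/-- The coadjoint action: `(coad br x y ξ) z = -ξ [x,y,z]`. -/
def coad (br : A →ₗ[F] A →ₗ[F] A →ₗ[F] A) (x y : A) :
    Module.Dual F A →ₗ[F] Module.Dual F A :=
  - (br x y).dualMap

/-- The bracket on `A ⊕ A*` built from the bracket `br` on `A`, the bracket
`brs` on `A*`, the coadjoint action of `A` on `A*`, and the coadjoint action
`aφ` of `A*` on `A`. -/
def dblBr (br : A →ₗ[F] A →ₗ[F] A →ₗ[F] A)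
    (brs : Module.Dual F A →ₗ[F] Module.Dual F A →ₗ[F]
      Module.Dual F A →ₗ[F] Module.Dual F A)
    (aφ : Module.Dual F A → Module.Dual F A → A → A) :
    A × Module.Dual F A → A × Module.Dual F A → A × Module.Dual F A →
      A × Module.Dual F A :=
  fun p q r =>
    (br p.1 q.1 r.1 + aφ p.2 q.2 r.1 + aφ r.2 p.2 q.1 + aφ q.2 r.2 p.1,
     brs p.2 q.2 r.2 + coad br p.1 q.1 r.2 + coad br r.1 p.1 q.2 +
       coad br q.1 r.1 p.2)

/-- The natural symmetric pairing `(x+ξ, y+η) = η(x) + ξ(y)` on `A ⊕ A*`. -/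
def dblForm : A × Module.Dual F A → A × Module.Dual F A → F :=
  fun p q => q.2 p.1 + p.2 q.1

/-- Filippov identity for an unbundled ternary operation. -/
def FilippovP {M : Type*} [AddCommGroup M] (m : M → M → M → M) : Prop :=
  ∀ x1 x2 x3 x4 x5,
    m x1 x2 (m x3 x4 x5) =
      m (m x1 x2 x3) x4 x5 + m x3 (m x1 x2 x4) x5 + m x3 x4 (m x1 x2 x5)

end Defs

/-!
The pairing of `A` with `A*` determines `aφ` from `brs`, so `aφ` is trilinear and the double
bracket is an alternating trilinear map on `A × A*`. Its Filippov defect is additive in each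
argument and alternating in the first two and in the last three arguments, so the Filippov identity
only has to be checked on arguments taken from `A` or from `A*`, with the elements of `A` first in
each group: twelve cases, each landing in `A` or in `A*` alone. Six of them are the Filippov
identities of `A` and `A*` and the representation identities of `coad` and `aφ`, which hold because
both actions are contragredient to adjoint actions. The other six are, up to skew-symmetry, the six
conditions of a matched pair.
-/

open Module

section Alternating

variable {F L : Type*} [Field F] [AddCommGroup L] [Module F L]
  {br : L →ₗ[F] L →ₗ[F] L →ₗ[F] L}

theorem IsAlt.swap₁₂ (h : IsAlt br) (x y z : L) : br y x z = -br x y z := by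
  have h' := h.1 (x + y) z
  simp only [map_add, LinearMap.add_apply, h.1, zero_add, add_zero] at h'
  exact eq_neg_of_add_eq_zero_left h'

theorem IsAlt.swap₂₃ (h : IsAlt br) (x y z : L) : br x z y = -br x y z := by
  have h' := h.2.1 x (y + z)
  simp only [map_add, LinearMap.add_apply, h.2.1, zero_add, add_zero] at h'
  exact eq_neg_of_add_eq_zero_left h'

theorem IsAlt.cycle (h : IsAlt br) (x y z : L) : br y z x = br x y z := by
  rw [h.swap₂₃, h.swap₁₂, neg_neg]

theorem Is3Lie.bracket_left (h : Is3Lie br) (x₁ x₂ x₃ x₄ z : L) :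
    br (br x₁ x₂ x₃) x₄ z =
      -(br x₁ x₄ (br x₂ x₃ z) + br x₂ x₄ (br x₃ x₁ z) + br x₃ x₄ (br x₁ x₂ z)) := by
  have h₁ := h.2 x₁ z x₂ x₃ x₄
  have h₂ := h.2 x₂ x₃ x₁ x₄ z
  rw [← h.1.cycle (br x₁ z x₂) x₃ x₄, h.1.swap₂₃ x₁ x₂ z, h.1.swap₂₃ x₂ x₄ (br x₁ z x₃),
    h.1.cycle x₃ x₁ z, h.1.swap₂₃ x₁ x₄ z] at h₁
  simp only [map_neg] at h₁
  rw [h.1.cycle x₁ x₂ x₃, h.1.swap₂₃ x₁ z (br x₂ x₃ x₄)] at h₂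
  linear_combination (norm := module) h₁ - h₂

end Alternating

section Coadjoint

variable {F L V : Type*} [Field F] [AddCommGroup L] [Module F L] [AddCommGroup V] [Module F V]

/-- `σ` is contragredient to the adjoint action of `br` with respect to the pairing `B`. Both
`coad br` (with `B` the identity of `L*`) and `aφ` (with `B` the evaluation pairing of `A`
with `A*`) are of this form. -/
def IsCoadjoint (br : L →ₗ[F] L →ₗ[F] L →ₗ[F] L) (B : V →ₗ[F] L →ₗ[F] F) (σ : L → L → V → V) :
    Prop :=
  ∀ x y v w, B (σ x y v) w = -B v (br x y w)

namespace IsCoadjoint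

variable {br : L →ₗ[F] L →ₗ[F] L →ₗ[F] L} {B : V →ₗ[F] L →ₗ[F] F} {σ : L → L → V → V}
  (hσ : IsCoadjoint br B σ) (hB : Function.Injective B)
include hσ hB

theorem swap (hbr : IsAlt br) (x y : L) (v : V) : σ y x v = -σ x y v :=
  hB <| LinearMap.ext fun w => by
    rw [map_neg, LinearMap.neg_apply, hσ, hσ, hbr.swap₁₂, map_neg]

theorem self (hbr : IsAlt br) (x : L) (v : V) : σ x x v = 0 :=
  hB <| LinearMap.ext fun w => by simp [hσ _ _ _ w, hbr.1]

theorem filippov (hbr : Filippov br) (x₁ x₂ x₃ x₄ : L) (v : V) :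
    σ x₁ x₂ (σ x₃ x₄ v) = σ (br x₁ x₂ x₃) x₄ v + σ x₃ (br x₁ x₂ x₄) v + σ x₃ x₄ (σ x₁ x₂ v) :=
  hB <| LinearMap.ext fun w => by
    simp only [map_add, LinearMap.add_apply, hσ _ _ _ w, hσ _ _ _ (br _ _ w), neg_neg,
      hbr x₁ x₂ x₃ x₄ w]
    ring

theorem bracket_left (hbr : Is3Lie br) (x₁ x₂ x₃ x₄ : L) (v : V) :
    σ (br x₁ x₂ x₃) x₄ v = σ x₂ x₃ (σ x₁ x₄ v) + σ x₃ x₁ (σ x₂ x₄ v) + σ x₁ x₂ (σ x₃ x₄ v) :=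
  hB <| LinearMap.ext fun w => by
    simp only [map_add, LinearMap.add_apply, hσ _ _ _ w, hσ _ _ _ (br _ _ w), neg_neg,
      hbr.bracket_left, map_neg]

theorem exists_trilinear : ∃ φ : L →ₗ[F] L →ₗ[F] V →ₗ[F] V, ∀ x y v, φ x y v = σ x y v := by
  have ext {u u' : V} (h : ∀ w, B u w = B u' w) : u = u' := hB (LinearMap.ext h)
  let φ (x y : L) : V →ₗ[F] V :=
    { toFun := σ x y
      map_add' := fun v v' => ext fun w => by
        simp only [hσ _ _ _ w, map_add, LinearMap.add_apply]
        ring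
      map_smul' := fun c v => ext fun w => by simp [hσ _ _ _ w] }
  refine ⟨LinearMap.mk₂ F φ ?_ ?_ ?_ ?_, fun _ _ _ => rfl⟩ <;>
    intros <;> ext v <;> refine ext fun w => ?_ <;>
    simp only [φ, LinearMap.coe_mk, AddHom.coe_mk, hσ _ _ _ w, map_add, map_smul,
      LinearMap.add_apply, LinearMap.smul_apply, smul_eq_mul] <;>
    ring

end IsCoadjoint

end Coadjoint

section DoubleBracket

variable {F A : Type*} [Field F] [AddCommGroup A] [Module F A]
  (br : A →ₗ[F] A →ₗ[F] A →ₗ[F] A)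

@[simp]
theorem coad_apply (x y : A) (a : Dual F A) (z : A) : coad br x y a z = -a (br x y z) := rfl

@[simp]
theorem coad_zero_left (y : A) : coad br 0 y = 0 := by ext; simp

@[simp]
theorem coad_zero_right (x : A) : coad br x 0 = 0 := by ext; simp

@[simp]
theorem coad_neg_right (x y : A) : coad br x (-y) = -coad br x y := by ext; simp

theorem isCoadjoint_coad : IsCoadjoint br LinearMap.id fun x y => coad br x y :=
  fun x y a w => coad_apply br x y a w

variable (brs : Dual F A →ₗ[F] Dual F A →ₗ[F] Dual F A →ₗ[F] Dual F A)
  (φ : Dual F A →ₗ[F] Dual F A →ₗ[F] A →ₗ[F] A)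

def doubleBracket :
    A × Dual F A →ₗ[F] A × Dual F A →ₗ[F] A × Dual F A →ₗ[F] A × Dual F A :=
  LinearMap.mk₂ F (fun p q =>
    { toFun := dblBr br brs (fun α β x => φ α β x) p q
      map_add' := fun r r' => by ext <;> simp [dblBr] <;> abel
      map_smul' := fun c r => by ext <;> simp [dblBr] })
    (fun p p' q => by ext <;> simp [dblBr] <;> abel)
    (fun c p q => by ext <;> simp [dblBr])
    (fun p q q' => by ext <;> simp [dblBr] <;> abel)
    (fun c p q => by ext <;> simp [dblBr])

@[simp]
theorem doubleBracket_apply (p q r : A × Dual F A) :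
    doubleBracket br brs φ p q r = dblBr br brs (fun α β x => φ α β x) p q r := rfl

variable {br brs φ}

theorem isAlt_doubleBracket (hbr : IsAlt br) (hbrs : IsAlt brs)
    (hφ : IsCoadjoint brs (Dual.eval F A) fun α β x => φ α β x) :
    IsAlt (doubleBracket br brs φ) := by
  have φ_swap := hφ.swap (eval_apply_injective F) hbrs
  have φ_self := hφ.self (eval_apply_injective F) hbrs
  refine ⟨fun p r => ?_, fun p q => ?_, fun p q => ?_⟩ <;> ext <;>
    simp only [doubleBracket_apply, dblBr, hbr.1, hbr.2.1, hbr.2.2, hbrs.1, hbrs.2.1, hbrs.2.2,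
      φ_self, coad_apply, map_zero, LinearMap.add_apply, LinearMap.zero_apply, Prod.fst_zero,
      Prod.snd_zero, neg_zero, add_zero, zero_add] <;>
    first | (rw [φ_swap]; abel) | (rw [hbr.swap₁₂, map_neg]; abel)

end DoubleBracket

section FilippovDefect

variable {F M : Type*} [Field F] [AddCommGroup M] [Module F M]
  (T : M →ₗ[F] M →ₗ[F] M →ₗ[F] M)

def filippovDefect (x₁ x₂ x₃ x₄ x₅ : M) : M :=
  T x₁ x₂ (T x₃ x₄ x₅) - (T (T x₁ x₂ x₃) x₄ x₅ + T x₃ (T x₁ x₂ x₄) x₅ + T x₃ x₄ (T x₁ x₂ x₅))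

theorem filippov_iff_filippovDefect_eq_zero :
    Filippov T ↔ ∀ x₁ x₂ x₃ x₄ x₅, filippovDefect T x₁ x₂ x₃ x₄ x₅ = 0 := by
  simp only [Filippov, filippovDefect, sub_eq_zero]

variable {T} (x₁ x₂ x₃ x₄ x₅ y : M)

theorem filippovDefect_add₁ :
    filippovDefect T (x₁ + y) x₂ x₃ x₄ x₅ =
      filippovDefect T x₁ x₂ x₃ x₄ x₅ + filippovDefect T y x₂ x₃ x₄ x₅ := by
  simp only [filippovDefect, map_add, LinearMap.add_apply]
  abel

theorem filippovDefect_add₂ :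
    filippovDefect T x₁ (x₂ + y) x₃ x₄ x₅ =
      filippovDefect T x₁ x₂ x₃ x₄ x₅ + filippovDefect T x₁ y x₃ x₄ x₅ := by
  simp only [filippovDefect, map_add, LinearMap.add_apply]
  abel

theorem filippovDefect_add₃ :
    filippovDefect T x₁ x₂ (x₃ + y) x₄ x₅ =
      filippovDefect T x₁ x₂ x₃ x₄ x₅ + filippovDefect T x₁ x₂ y x₄ x₅ := by
  simp only [filippovDefect, map_add, LinearMap.add_apply]
  abel

theorem filippovDefect_add₄ :
    filippovDefect T x₁ x₂ x₃ (x₄ + y) x₅ =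
      filippovDefect T x₁ x₂ x₃ x₄ x₅ + filippovDefect T x₁ x₂ x₃ y x₅ := by
  simp only [filippovDefect, map_add, LinearMap.add_apply]
  abel

theorem filippovDefect_add₅ :
    filippovDefect T x₁ x₂ x₃ x₄ (x₅ + y) =
      filippovDefect T x₁ x₂ x₃ x₄ x₅ + filippovDefect T x₁ x₂ x₃ x₄ y := by
  simp only [filippovDefect, map_add]
  abel

variable (hT : IsAlt T)
include hT

theorem IsAlt.filippovDefect_swap₁₂ :
    filippovDefect T x₂ x₁ x₃ x₄ x₅ = -filippovDefect T x₁ x₂ x₃ x₄ x₅ := by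
  simp only [filippovDefect, hT.swap₁₂ x₁ x₂, map_neg, LinearMap.neg_apply]; abel

theorem IsAlt.filippovDefect_swap₃₄ :
    filippovDefect T x₁ x₂ x₄ x₃ x₅ = -filippovDefect T x₁ x₂ x₃ x₄ x₅ := by
  simp only [filippovDefect, hT.swap₁₂ x₃ x₄, hT.swap₁₂ x₃ (T x₁ x₂ x₄),
    hT.swap₁₂ (T x₁ x₂ x₃) x₄, map_neg]; abel

theorem IsAlt.filippovDefect_swap₄₅ :
    filippovDefect T x₁ x₂ x₃ x₅ x₄ = -filippovDefect T x₁ x₂ x₃ x₄ x₅ := by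
  simp only [filippovDefect, hT.swap₂₃ x₃ x₄ x₅, hT.swap₂₃ (T x₁ x₂ x₃) x₄ x₅,
    hT.swap₂₃ x₃ x₄ (T x₁ x₂ x₅), hT.swap₂₃ x₃ (T x₁ x₂ x₄) x₅, map_neg]; abel

end FilippovDefect

section Prod

variable {F M₁ M₂ : Type*} [Field F] [AddCommGroup M₁] [Module F M₁] [AddCommGroup M₂] [Module F M₂]

local notation "ι" => Sum.elim (LinearMap.inl F M₁ M₂) (LinearMap.inr F M₁ M₂)

theorem filippov_prod_of_filippovDefect_eq_zero
    {T : M₁ × M₂ →ₗ[F] M₁ × M₂ →ₗ[F] M₁ × M₂ →ₗ[F] M₁ × M₂}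
    (h : ∀ u₁ u₂ u₃ u₄ u₅, filippovDefect T (ι u₁) (ι u₂) (ι u₃) (ι u₄) (ι u₅) = 0) :
    Filippov T := by
  have split (p : M₁ × M₂) : p = ι (.inl p.1) + ι (.inr p.2) := by simp
  refine (filippov_iff_filippovDefect_eq_zero T).2 fun p₁ p₂ p₃ p₄ p₅ => ?_
  rw [split p₁, split p₂, split p₃, split p₄, split p₅]
  simp only [filippovDefect_add₁, filippovDefect_add₂, filippovDefect_add₃, filippovDefect_add₄,
    filippovDefect_add₅, h, add_zero]

theorem IsAlt.filippov_prod_of_sorted {T : M₁ × M₂ →ₗ[F] M₁ × M₂ →ₗ[F] M₁ × M₂ →ₗ[F] M₁ × M₂}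
    (hT : IsAlt T)
    (h : ∀ u₁ u₂ u₃ u₄ u₅ : M₁ ⊕ M₂, (u₁.isRight → u₂.isRight) → (u₃.isRight → u₄.isRight) →
      (u₄.isRight → u₅.isRight) → filippovDefect T (ι u₁) (ι u₂) (ι u₃) (ι u₄) (ι u₅) = 0) :
    Filippov T := by
  have s₁₂ (x a) (u₃ u₄ u₅ : M₁ ⊕ M₂) :=
    hT.filippovDefect_swap₁₂ (ι (.inl x)) (ι (.inr a)) (ι u₃) (ι u₄) (ι u₅)
  have s₃₄ (x a) (u₁ u₂ u₅ : M₁ ⊕ M₂) :=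
    hT.filippovDefect_swap₃₄ (ι u₁) (ι u₂) (ι (.inl x)) (ι (.inr a)) (ι u₅)
  have s₄₅ (x a) (u₁ u₂ u₃ : M₁ ⊕ M₂) :=
    hT.filippovDefect_swap₄₅ (ι u₁) (ι u₂) (ι u₃) (ι (.inl x)) (ι (.inr a))
  refine filippov_prod_of_filippovDefect_eq_zero ?_
  rintro (x₁ | a₁) (x₂ | a₂) (x₃ | a₃) (x₄ | a₄) (x₅ | a₅)
  all_goals
    try simp only [s₁₂, s₃₄, s₄₅, neg_neg, neg_eq_zero]
    exact h _ _ _ _ _ (by simp) (by simp) (by simp)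

end Prod

section MatchedPair

variable {F A : Type*} [Field F] [AddCommGroup A] [Module F A]

def IsMatchedPair (br : A →ₗ[F] A →ₗ[F] A →ₗ[F] A)
    (brs : Dual F A →ₗ[F] Dual F A →ₗ[F] Dual F A →ₗ[F] Dual F A)
    (aφ : Dual F A → Dual F A → A → A) : Prop :=
  (∀ x y a b c,
    coad br x y (brs a b c) =
      brs (coad br x y a) b c + brs a (coad br x y b) c + brs a b (coad br x y c)) ∧
  (∀ (α β : Dual F A) x y z,
    aφ α β (br x y z) = br (aφ α β x) y z + br x (aφ α β y) z + br x y (aφ α β z)) ∧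
  (∀ x₁ x₂ x₃ a₁ a₂,
    br x₁ x₂ (aφ a₁ a₂ x₃) - aφ a₁ a₂ (br x₁ x₂ x₃) =
      aφ (coad br x₁ x₂ a₁) a₂ x₃ + aφ a₁ (coad br x₁ x₂ a₂) x₃) ∧
  (∀ a₁ a₂ a₃ x₁ x₂,
    brs a₁ a₂ (coad br x₁ x₂ a₃) - coad br x₁ x₂ (brs a₁ a₂ a₃) =
      coad br (aφ a₁ a₂ x₁) x₂ a₃ + coad br x₁ (aφ a₁ a₂ x₂) a₃) ∧
  (∀ x₁ x₂ x₃ a₁ a₂,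
    br x₁ x₂ (aφ a₁ a₂ x₃) =
      aφ (coad br x₁ x₂ a₁) a₂ x₃ - aφ a₁ (coad br x₃ x₁ a₂) x₂ - aφ a₁ (coad br x₂ x₃ a₂) x₁) ∧
  (∀ x₁ x₂ a₁ a₂ a₃,
    brs a₁ a₂ (coad br x₁ x₂ a₃) =
      coad br (aφ a₁ a₂ x₁) x₂ a₃ - coad br x₁ (aφ a₃ a₁ x₂) a₂ - coad br x₁ (aφ a₂ a₃ x₂) a₁)

variable {br : A →ₗ[F] A →ₗ[F] A →ₗ[F] A}
  {brs : Dual F A →ₗ[F] Dual F A →ₗ[F] Dual F A →ₗ[F] Dual F A}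
  {φ : Dual F A →ₗ[F] Dual F A →ₗ[F] A →ₗ[F] A}

theorem filippov_doubleBracket_of_isMatchedPair (hbr : Is3Lie br) (hbrs : Is3Lie brs)
    (hφ : IsCoadjoint brs (Dual.eval F A) fun α β x => φ α β x)
    (h : IsMatchedPair br brs fun α β x => φ α β x) :
    Filippov (doubleBracket br brs φ) := by
  obtain ⟨h₁, h₂, h₃, h₄, h₅, h₆⟩ := h
  beta_reduce at h₃ h₄ h₅ h₆
  have hcoad := isCoadjoint_coad br
  have coad_swap := hcoad.swap Function.injective_id hbr.1
  have φ_swap := hφ.swap (eval_apply_injective F) hbrs.1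
  refine (isAlt_doubleBracket hbr.1 hbrs.1 hφ).filippov_prod_of_sorted ?_
  rintro (x₁ | a₁) (x₂ | a₂) (x₃ | a₃) (x₄ | a₄) (x₅ | a₅) h₁₂ h₃₄ h₄₅ <;>
    simp only [Sum.isRight_inl, Sum.isRight_inr, Bool.false_eq_true, implies_true, imp_self,
      imp_false, not_true_eq_false] at h₁₂ h₃₄ h₄₅ <;>
    simp only [filippovDefect, Sum.elim_inl, Sum.elim_inr, LinearMap.coe_inl, LinearMap.coe_inr,
      doubleBracket_apply, dblBr, map_zero, LinearMap.zero_apply, coad_zero_left, coad_zero_right,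
      add_zero, zero_add, Prod.mk_add_mk, Prod.mk_sub_mk, sub_self, Prod.mk_eq_zero, sub_eq_zero,
      true_and, and_true]
  case inl.inl.inl.inl.inl => exact hbr.2 ..
  case inl.inl.inl.inl.inr => exact hcoad.filippov Function.injective_id hbr.2 ..
  case inl.inl.inl.inr.inr => linear_combination (norm := module) h₃ ..
  case inl.inl.inr.inr.inr => exact h₁ ..
  case inl.inr.inl.inl.inl => exact hcoad.bracket_left Function.injective_id hbr ..
  case inl.inr.inl.inl.inr =>
    rw [φ_swap (coad br x₃ x₄ a₅) a₂ x₁, coad_swap x₁ x₃ a₂, φ_swap a₅ (coad br x₄ x₁ a₂) x₃,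
      φ_swap a₅ a₂ x₁]
    simp only [map_neg, LinearMap.neg_apply]
    linear_combination (norm := module) h₅ x₃ x₄ x₁ a₅ a₂
  case inl.inr.inl.inr.inr =>
    rw [← hbrs.1.cycle (coad br x₃ x₁ a₂) a₄ a₅, coad_swap x₃ _ a₄, φ_swap a₅ a₂ x₁, coad_neg_right,
      LinearMap.neg_apply, neg_neg]
    linear_combination (norm := module) -h₆ x₃ x₁ a₄ a₅ a₂
  case inl.inr.inr.inr.inr =>
    rw [φ_swap (brs a₃ a₄ a₅) a₂ x₁, hφ.bracket_left (eval_apply_injective F) hbrs, φ_swap a₂ a₃ x₁,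
      φ_swap a₂ a₄ x₁, φ_swap a₂ a₅ x₁]
    simp only [map_neg]
    abel
  case inr.inr.inl.inl.inl => exact h₂ ..
  case inr.inr.inl.inl.inr => linear_combination (norm := module) h₄ ..
  case inr.inr.inl.inr.inr =>
    rw [hφ.filippov (eval_apply_injective F) hbrs.2]
    abel
  case inr.inr.inr.inr.inr => exact hbrs.2 ..

theorem IsMatchedPair.of_filippov_doubleBracket (hbr : IsAlt br) (hbrs : IsAlt brs)
    (hφ : IsCoadjoint brs (Dual.eval F A) fun α β x => φ α β x)
    (h : Filippov (doubleBracket br brs φ)) :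
    IsMatchedPair br brs fun α β x => φ α β x := by
  have coad_swap := (isCoadjoint_coad br).swap Function.injective_id hbr
  have φ_swap := hφ.swap (eval_apply_injective F) hbrs
  have h₁ := fun x y a b c => h (x, 0) (y, 0) (0, a) (0, b) (0, c)
  have h₂ := fun α β x y z => h (0, α) (0, β) (x, 0) (y, 0) (z, 0)
  have h₃ := fun x₁ x₂ x₃ a₁ a₂ => h (x₁, 0) (x₂, 0) (x₃, 0) (0, a₁) (0, a₂)
  have h₄ := fun a₁ a₂ a₃ x₁ x₂ => h (0, a₁) (0, a₂) (x₁, 0) (x₂, 0) (0, a₃)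
  have h₅ := fun x₁ x₂ x₃ a₁ a₂ => h (x₃, 0) (0, a₂) (x₁, 0) (x₂, 0) (0, a₁)
  have h₆ := fun x₁ x₂ a₁ a₂ a₃ => h (x₂, 0) (0, a₃) (x₁, 0) (0, a₁) (0, a₂)
  simp only [doubleBracket_apply, dblBr, map_zero, LinearMap.zero_apply, coad_zero_left,
    coad_zero_right, add_zero, zero_add, Prod.mk_add_mk, Prod.mk.injEq, true_and, and_true]
    at h₁ h₂ h₃ h₄ h₅ h₆
  refine ⟨h₁, h₂, fun x₁ x₂ x₃ a₁ a₂ => ?_, fun a₁ a₂ a₃ x₁ x₂ => ?_, fun x₁ x₂ x₃ a₁ a₂ => ?_,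
    fun x₁ x₂ a₁ a₂ a₃ => ?_⟩ <;>
    beta_reduce
  · linear_combination (norm := module) h₃ x₁ x₂ x₃ a₁ a₂
  · linear_combination (norm := module) h₄ a₁ a₂ a₃ x₁ x₂
  · have h₅ := h₅ x₁ x₂ x₃ a₁ a₂
    rw [φ_swap (coad br x₁ x₂ a₁) a₂ x₃, coad_swap x₃ x₁ a₂, φ_swap a₁ (coad br x₂ x₃ a₂) x₁,
      φ_swap a₁ a₂ x₃] at h₅
    simp only [map_neg, LinearMap.neg_apply] at h₅
    linear_combination (norm := module) h₅
  · have h₆ := h₆ x₁ x₂ a₁ a₂ a₃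
    rw [← hbrs.cycle (coad br x₁ x₂ a₃) a₁ a₂, coad_swap x₁ (φ a₃ a₂ x₂) a₁, φ_swap a₂ a₃ x₂,
      coad_neg_right, LinearMap.neg_apply, neg_neg] at h₆
    linear_combination (norm := module) -h₆

end MatchedPair

theorem double_three_lie_iff_matched_pair_general
    {F A : Type*} [Field F] [AddCommGroup A] [Module F A]
    (br : A →ₗ[F] A →ₗ[F] A →ₗ[F] A) (h3 : Is3Lie br)
    (brs : Module.Dual F A →ₗ[F] Module.Dual F A →ₗ[F]
      Module.Dual F A →ₗ[F] Module.Dual F A) (h3s : Is3Lie brs)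
    (aφ : Module.Dual F A → Module.Dual F A → A → A)
    (haφ : ∀ α β x (ζ : Module.Dual F A), ζ (aφ α β x) = -(brs α β ζ x)) :
    FilippovP (dblBr br brs aφ) ↔
      ((∀ x y a b c,
        coad br x y (brs a b c) =
          brs (coad br x y a) b c + brs a (coad br x y b) c +
            brs a b (coad br x y c)) ∧
      (∀ (α β : Module.Dual F A) x y z,
        aφ α β (br x y z) =
          br (aφ α β x) y z + br x (aφ α β y) z + br x y (aφ α β z)) ∧
      (∀ x1 x2 x3 a1 a2,
        br x1 x2 (aφ a1 a2 x3) - aφ a1 a2 (br x1 x2 x3) =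
          aφ (coad br x1 x2 a1) a2 x3 + aφ a1 (coad br x1 x2 a2) x3) ∧
      (∀ a1 a2 a3 x1 x2,
        brs a1 a2 (coad br x1 x2 a3) - coad br x1 x2 (brs a1 a2 a3) =
          coad br (aφ a1 a2 x1) x2 a3 + coad br x1 (aφ a1 a2 x2) a3) ∧
      (∀ x1 x2 x3 a1 a2,
        br x1 x2 (aφ a1 a2 x3) =
          aφ (coad br x1 x2 a1) a2 x3 - aφ a1 (coad br x3 x1 a2) x2 -
            aφ a1 (coad br x2 x3 a2) x1) ∧
      (∀ x1 x2 a1 a2 a3,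
        brs a1 a2 (coad br x1 x2 a3) =
          coad br (aφ a1 a2 x1) x2 a3 - coad br x1 (aφ a3 a1 x2) a2 -
            coad br x1 (aφ a2 a3 x2) a1)) := by
  have hφ : IsCoadjoint brs (Dual.eval F A) aφ := haφ
  obtain ⟨φ, hφ_eq⟩ := hφ.exists_trilinear (eval_apply_injective F)
  obtain rfl : aφ = fun α β x => φ α β x := by
    funext α β x
    exact (hφ_eq α β x).symm
  exact ⟨IsMatchedPair.of_filippov_doubleBracket h3.1 h3s.1 hφ,
    filippov_doubleBracket_of_isMatchedPair h3 h3s hφ⟩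

/-- the bracket on `A ⊕ A*` satisfies the Filippov identity iff
`(A, A*, ad*, aφ*)` is a matched pair. -/
theorem double_three_lie_iff_matched_pair
    {F A : Type*} [Field F] [AddCommGroup A] [Module F A] [FiniteDimensional F A]
    (br : A →ₗ[F] A →ₗ[F] A →ₗ[F] A) (h3 : Is3Lie br)
    (brs : Module.Dual F A →ₗ[F] Module.Dual F A →ₗ[F]
      Module.Dual F A →ₗ[F] Module.Dual F A) (h3s : Is3Lie brs)
    (aφ : Module.Dual F A → Module.Dual F A → A → A)
    (haφ : ∀ α β x (ζ : Module.Dual F A), ζ (aφ α β x) = -(brs α β ζ x)) :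
    FilippovP (dblBr br brs aφ) ↔
      ((∀ x y a b c,
        coad br x y (brs a b c) =
          brs (coad br x y a) b c + brs a (coad br x y b) c +
            brs a b (coad br x y c)) ∧
      (∀ (α β : Module.Dual F A) x y z,
        aφ α β (br x y z) =
          br (aφ α β x) y z + br x (aφ α β y) z + br x y (aφ α β z)) ∧
      (∀ x1 x2 x3 a1 a2,
        br x1 x2 (aφ a1 a2 x3) - aφ a1 a2 (br x1 x2 x3) =
          aφ (coad br x1 x2 a1) a2 x3 + aφ a1 (coad br x1 x2 a2) x3) ∧
      (∀ a1 a2 a3 x1 x2,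
        brs a1 a2 (coad br x1 x2 a3) - coad br x1 x2 (brs a1 a2 a3) =
          coad br (aφ a1 a2 x1) x2 a3 + coad br x1 (aφ a1 a2 x2) a3) ∧
      (∀ x1 x2 x3 a1 a2,
        br x1 x2 (aφ a1 a2 x3) =
          aφ (coad br x1 x2 a1) a2 x3 - aφ a1 (coad br x3 x1 a2) x2 -
            aφ a1 (coad br x2 x3 a2) x1) ∧
      (∀ x1 x2 a1 a2 a3,
        brs a1 a2 (coad br x1 x2 a3) =
          coad br (aφ a1 a2 x1) x2 a3 - coad br x1 (aφ a3 a1 x2) a2 -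
            coad br x1 (aφ a2 a3 x2) a1)) :=
  double_three_lie_iff_matched_pair_general br h3 brs h3s aφ haφ
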